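/- For every integer t ≥ 2, the theta-type series Σ_{n∈ℤ} (-1)^n q^{(2t-1)n/2 + 3(2t-1)^2 n^2/2} equals Π_{n≥1} (1-q^n) times the generating function Π_{n ≥ 1, n ≢ 0, ±(2t-1)(3t-2) mod 3(2t-1)^2} 1/(1-q^n), as formal power series. -/

import Mathlib

open PowerSeries

/-- The infinite product `∏_{n ≥ 1} f n` of power series, where the `n`-th factor
is `1 + O(q^n)`: its `N`-th coefficient is the `N`-th coefficient of any
sufficiently long partial product. -/
noncomputable def seriesProd (f : ℕ → PowerSeries ℤ) : PowerSeries ℤ :=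
  PowerSeries.mk fun N => coeff N (∏ n ∈ Finset.range (N + 1), f n)

/-- A formal sum `∑_{n ∈ ℤ} c n * q^(e n)`, where for each `N` only finitely many
`n ∈ ℤ` satisfy `e n = N`: its `N`-th coefficient is `∑_{n : e n = N} c n`. -/
noncomputable def seriesSum (c : ℤ → ℤ) (e : ℤ → ℕ) : PowerSeries ℤ :=
  PowerSeries.mk fun N => ∑' n : ℤ, if e n = N then c n else 0

/-- `∏_{n ≥ 1, n ≢ 0, ±a (mod b)} 1/(1 - q^n)` as a formal power series in `ℤ⟦q⟧`. -/
noncomputable def AG (b a : ℕ) : PowerSeries ℤ :=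
  seriesProd fun n =>
    if (n + 1) % b = 0 ∨ (n + 1) % b = a % b ∨ (n + 1 + a) % b = 0 then 1
    else PowerSeries.invOfUnit (1 - X ^ (n + 1)) 1

/-!
Put `a = (2t-1)(3t-2)`, `c = (2t-1)(3t-1)` and `b = a + c = 3(2t-1)²`. Multiplying by
`∏ (1 - qⁿ)` cancels every factor of the character product except those with
`n ≡ 0, a, c (mod b)`, leaving `∏_{k ≥ 0} (1 - q^{bk+a}) (1 - q^{bk+c}) (1 - q^{bk+b})`, while
`n ↦ -n` turns the theta series into `Σ_j (-1)^j q^{aj + b j(j-1)/2}`. The two agree by the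
Jacobi triple product at `x = q^a`, `q ↦ q^b`.

The triple product is proved coefficientwise from its finite form
`∏_{i<M} (1 - x qⁱ)(x - q^{i+1}) = Σ_k (-1)^{k+M} x^k q^{(k-M)(k-M-1)/2} [2M, k]_q`,
which is the `q`-binomial theorem at `y = q^M`. After multiplying by `(q;q)_M`, the congruence
`(q;q)_M [2M, k]_q ≡ 1 (mod q^{min(k, 2M-k) + 1})` shows that for `M > N` every term contributes
to the coefficient of `q^N` only through its leading monomial.
-/

open Finset

section CommRing

variable {A : Type*} [CommRing A]

def gaussBinom (q : A) : ℕ → ℕ → A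
  | _, 0 => 1
  | 0, _ + 1 => 0
  | n + 1, k + 1 => gaussBinom q n k + q ^ (k + 1) * gaussBinom q n (k + 1)

@[simp] lemma gaussBinom_zero_right (q : A) (n : ℕ) : gaussBinom q n 0 = 1 := by
  cases n <;> rfl

lemma gaussBinom_succ_succ (q : A) (n k : ℕ) :
    gaussBinom q (n + 1) (k + 1) = gaussBinom q n k + q ^ (k + 1) * gaussBinom q n (k + 1) :=
  rfl

lemma gaussBinom_eq_zero_of_lt (q : A) {n k : ℕ} (h : n < k) : gaussBinom q n k = 0 := by
  induction n generalizing k with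
  | zero => obtain ⟨k, rfl⟩ := Nat.exists_eq_succ_of_ne_zero (by omega : k ≠ 0); rfl
  | succ n ih =>
    obtain ⟨k, rfl⟩ := Nat.exists_eq_succ_of_ne_zero (by omega : k ≠ 0)
    rw [gaussBinom_succ_succ, ih (by omega), ih (by omega), mul_zero, add_zero]

lemma gaussBinom_self (q : A) (n : ℕ) : gaussBinom q n n = 1 := by
  induction n with
  | zero => rfl
  | succ n ih => rw [gaussBinom_succ_succ, ih, gaussBinom_eq_zero_of_lt q n.lt_succ_self]; ring

/-- The `q`-binomial theorem. -/
theorem prod_add_mul_pow_eq_sum_gaussBinom (q x y : A) (n : ℕ) :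
    ∏ i ∈ range n, (y + x * q ^ i) =
      ∑ k ∈ range (n + 1), q ^ k.choose 2 * gaussBinom q n k * x ^ k * y ^ (n - k) := by
  induction n generalizing x with
  | zero => simp
  | succ n ih =>
    set S := ∑ k ∈ range (n + 1), q ^ k.choose 2 * gaussBinom q n k * (x * q) ^ k * y ^ (n - k)
    have hshift : ∏ k ∈ range n, (y + x * q ^ (k + 1)) =
        ∏ k ∈ range n, (y + x * q * q ^ k) :=
      prod_congr rfl fun k _ => by ring
    have hx : ∑ k ∈ range (n + 1), q ^ (k + 1).choose 2 * gaussBinom q n k * x ^ (k + 1) *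
        y ^ (n - k) = x * S := by
      rw [mul_sum]
      refine sum_congr rfl fun k _ => ?_
      rw [Nat.choose_succ_succ', Nat.choose_one_right]
      ring
    have hy : ∑ k ∈ range (n + 1), q ^ (k + 1).choose 2 * q ^ (k + 1) * gaussBinom q n (k + 1) *
        x ^ (k + 1) * y ^ (n - k) + y ^ (n + 1) = y * S := by
      conv_lhs => rw [sum_range_succ, gaussBinom_eq_zero_of_lt q n.lt_succ_self]
      conv_rhs => rw [mul_sum, sum_range_succ']
      simp only [mul_zero, zero_mul, add_zero, Nat.choose_zero_succ, gaussBinom_zero_right,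
        Nat.sub_zero, pow_zero, one_mul, mul_one, ← pow_succ']
      refine congrArg (· + _) (sum_congr rfl fun k hk => ?_)
      rw [show n - k = n - (k + 1) + 1 by grind]
      ring
    have hpascal : ∑ k ∈ range (n + 1), q ^ (k + 1).choose 2 * gaussBinom q (n + 1) (k + 1) *
        x ^ (k + 1) * y ^ (n + 1 - (k + 1)) =
        ∑ k ∈ range (n + 1), q ^ (k + 1).choose 2 * gaussBinom q n k * x ^ (k + 1) *
          y ^ (n - k) +
        ∑ k ∈ range (n + 1), q ^ (k + 1).choose 2 * q ^ (k + 1) * gaussBinom q n (k + 1) *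
          x ^ (k + 1) * y ^ (n - k) := by
      rw [← sum_add_distrib]
      refine sum_congr rfl fun k _ => ?_
      rw [gaussBinom_succ_succ, Nat.add_sub_add_right]
      ring
    rw [prod_range_succ', hshift, ih (x * q), sum_range_succ' _ (n + 1), hpascal]
    simp only [pow_zero, mul_one, Nat.choose_zero_succ, gaussBinom_zero_right, Nat.sub_zero]
    linear_combination -hx - hy

def qPochhammer (q : A) (n : ℕ) : A := ∏ i ∈ range n, (1 - q ^ (i + 1))

lemma qPochhammer_succ (q : A) (n : ℕ) :
    qPochhammer q (n + 1) = qPochhammer q n * (1 - q ^ (n + 1)) :=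
  prod_range_succ _ _

lemma gaussBinom_add_mul_qPochhammer_right (q : A) (k m : ℕ) :
    gaussBinom q (k + m) k * qPochhammer q m = ∏ r ∈ Ico k (k + m), (1 - q ^ (r + 1)) := by
  induction m generalizing k with
  | zero =>
    rw [add_zero, gaussBinom_self, Ico_self, prod_empty, qPochhammer, range_zero, prod_empty,
      mul_one]
  | succ m ihm =>
    induction k with
    | zero => rw [zero_add, gaussBinom_zero_right, one_mul, qPochhammer, range_eq_Ico]
    | succ k ihk =>
      have hm := ihm (k + 1)
      rw [show k + (m + 1) = k + 1 + m by ring, prod_eq_prod_Ico_succ_bot (by omega)] at ihk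
      rw [show k + 1 + (m + 1) = k + (m + 1) + 1 by ring, gaussBinom_succ_succ,
        prod_Ico_succ_top (by omega), show k + (m + 1) = k + 1 + m by ring]
      linear_combination ihk + q ^ (k + 1) * gaussBinom q (k + 1 + m) (k + 1) * qPochhammer_succ q m
        + q ^ (k + 1) * (1 - q ^ (m + 1)) * hm

lemma gaussBinom_add_mul_qPochhammer_left (q : A) (k m : ℕ) :
    gaussBinom q (k + m) k * qPochhammer q k = ∏ r ∈ Ico m (k + m), (1 - q ^ (r + 1)) := by
  induction m generalizing k with
  | zero => rw [add_zero, gaussBinom_self, one_mul, qPochhammer, range_eq_Ico]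
  | succ m ihm =>
    induction k with
    | zero =>
      rw [zero_add, gaussBinom_zero_right, Ico_self, prod_empty, qPochhammer, range_zero,
        prod_empty, mul_one]
    | succ k ihk =>
      have hm := ihm (k + 1)
      rw [prod_eq_prod_Ico_succ_bot (by omega)] at hm
      rw [show k + 1 + (m + 1) = k + (m + 1) + 1 by ring, gaussBinom_succ_succ,
        prod_Ico_succ_top (by omega)]
      rw [show k + (m + 1) = k + 1 + m by ring] at ihk ⊢
      linear_combination gaussBinom q (k + 1 + m) k * qPochhammer_succ q k
        + (1 - q ^ (k + 1)) * ihk + q ^ (k + 1) * hm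

lemma dvd_mul_sub_one {d x y : A} (hx : d ∣ x - 1) (hy : d ∣ y - 1) : d ∣ x * y - 1 := by
  rw [show x * y - 1 = x * (y - 1) + (x - 1) by ring]
  exact dvd_add (dvd_mul_of_dvd_right hy x) hx

lemma dvd_prod_sub_one {ι : Type*} {d : A} {s : Finset ι} {f : ι → A}
    (h : ∀ i ∈ s, d ∣ f i - 1) : d ∣ ∏ i ∈ s, f i - 1 :=
  prod_induction f (fun x => d ∣ x - 1) (fun _ _ => dvd_mul_sub_one) (by simp) h

lemma pow_dvd_one_sub_pow_sub_one (q : A) {m n : ℕ} (h : m ≤ n) :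
    q ^ m ∣ (1 - q ^ n) - 1 := by
  rw [sub_sub_cancel_left, dvd_neg]
  exact pow_dvd_pow q h

lemma pow_dvd_prod_Ico_one_sub_pow_sub_one (q : A) {d m n : ℕ} (h : d ≤ m) :
    q ^ (d + 1) ∣ ∏ r ∈ Ico m n, (1 - q ^ (r + 1)) - 1 :=
  dvd_prod_sub_one fun r hr => pow_dvd_one_sub_pow_sub_one q (by grind)

lemma pow_dvd_qPochhammer_mul_gaussBinom_sub_one (q : A) {k l M : ℕ} (h : min k l ≤ M) :
    q ^ (min k l + 1) ∣ qPochhammer q M * gaussBinom q (k + l) k - 1 := by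
  rcases le_total k l with hkl | hlk
  · rw [min_eq_left hkl] at h ⊢
    rw [qPochhammer, ← prod_range_mul_prod_Ico _ h, ← qPochhammer, mul_comm, ← mul_assoc,
      gaussBinom_add_mul_qPochhammer_left]
    exact dvd_mul_sub_one (pow_dvd_prod_Ico_one_sub_pow_sub_one q hkl)
      (pow_dvd_prod_Ico_one_sub_pow_sub_one q le_rfl)
  · rw [min_eq_right hlk] at h ⊢
    rw [qPochhammer, ← prod_range_mul_prod_Ico _ h, ← qPochhammer, mul_comm, ← mul_assoc,
      gaussBinom_add_mul_qPochhammer_right]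
    exact dvd_mul_sub_one (pow_dvd_prod_Ico_one_sub_pow_sub_one q hlk)
      (pow_dvd_prod_Ico_one_sub_pow_sub_one q le_rfl)

def triangular (j : ℤ) : ℕ := (j * (j - 1) / 2).toNat

lemma two_mul_natCast_triangular (j : ℤ) : 2 * (triangular j : ℤ) = j * (j - 1) := by
  have hnonneg : 0 ≤ j * (j - 1) := by rcases le_or_gt j 0 with h | h <;> nlinarith
  rw [triangular, Int.toNat_of_nonneg (by omega)]
  exact Int.two_mul_ediv_two_of_even (Int.even_mul_pred_self j)

lemma two_mul_natCast_choose_two (k : ℕ) : 2 * (k.choose 2 : ℤ) = k * (k - 1) := by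
  have h : (2 * (k.choose 2 : ℤ) : ℚ) = ((k * (k - 1) : ℤ) : ℚ) := by
    push_cast; rw [Nat.cast_choose_two]; ring
  exact_mod_cast h

/-- The finite Jacobi triple product. -/
theorem prod_one_sub_mul_prod_sub_eq_sum [IsDomain A] (x q : A) (hq : q ≠ 0) (M : ℕ) :
    (∏ i ∈ range M, (1 - x * q ^ i)) * ∏ i ∈ range M, (x - q ^ (i + 1)) =
      ∑ k ∈ range (2 * M + 1),
        (-1) ^ (k + M) * x ^ k * q ^ triangular (k - M) * gaussBinom q (2 * M) k := by
  -- The `q`-binomial theorem at `y = q ^ M`, `x ↦ -x` is this identity multiplied by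
  -- `(-1) ^ M * q ^ (M.choose 2 + M * M)`.
  have hlow : ∏ i ∈ range M, (q ^ M + -x * q ^ i) =
      (-1) ^ M * q ^ M.choose 2 * ∏ i ∈ range M, (x - q ^ (i + 1)) := by
    have hfactor : ∀ i ∈ range M, q ^ M + -x * q ^ (M - 1 - i) =
        -1 * q ^ (M - 1 - i) * (x - q ^ (i + 1)) := fun i hi => by
      rw [show q ^ M = q ^ (M - 1 - i) * q ^ (i + 1) by rw [← pow_add]; congr 1; grind]
      ring
    rw [← prod_range_reflect, prod_congr rfl hfactor, prod_mul_distrib, prod_mul_distrib,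
      prod_const, card_range, prod_pow_eq_pow_sum, sum_range_reflect (fun i => i), sum_range_id,
      ← Nat.choose_two_right]
  have hhigh : ∏ i ∈ range M, (q ^ M + -x * q ^ (M + i)) =
      q ^ (M * M) * ∏ i ∈ range M, (1 - x * q ^ i) := by
    rw [prod_congr rfl fun i _ => show q ^ M + -x * q ^ (M + i) = q ^ M * (1 - x * q ^ i) by ring,
      prod_mul_distrib, prod_const, card_range, ← pow_mul]
  have hterm : ∀ k ∈ range (2 * M + 1),
      q ^ k.choose 2 * gaussBinom q (2 * M) k * (-x) ^ k * (q ^ M) ^ (2 * M - k) =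
      (-1) ^ M * q ^ (M.choose 2 + M * M) *
        ((-1) ^ (k + M) * x ^ k * q ^ triangular (k - M) * gaussBinom q (2 * M) k) := by
    intro k hk
    rw [mem_range] at hk
    have hexp : k.choose 2 + M * (2 * M - k) = M.choose 2 + M * M + triangular (k - M) := by
      have := two_mul_natCast_choose_two k
      have := two_mul_natCast_choose_two M
      have := two_mul_natCast_triangular (k - M)
      zify [show k ≤ 2 * M by omega]
      linarith
    have hsign : (-1 : A) ^ k = (-1) ^ M * (-1) ^ (k + M) := by
      rw [← pow_add, show M + (k + M) = k + 2 * M by ring, pow_add, pow_mul]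
      simp
    calc _ = (-1) ^ k * x ^ k * q ^ (k.choose 2 + M * (2 * M - k)) * gaussBinom q (2 * M) k := by
          rw [neg_pow x, pow_add, ← pow_mul]; ring
      _ = _ := by rw [hexp, hsign, pow_add, pow_add]; ring
  have hbin := prod_add_mul_pow_eq_sum_gaussBinom q (-x) (q ^ M) (2 * M)
  rw [two_mul, prod_range_add, hlow, hhigh, ← two_mul, sum_congr rfl hterm, ← mul_sum] at hbin
  refine mul_left_cancel₀ (mul_ne_zero (pow_ne_zero M (neg_ne_zero.mpr one_ne_zero))
    (pow_ne_zero (M.choose 2 + M * M) hq)) ?_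
  linear_combination hbin

lemma eq_of_forall_X_pow_dvd_sub {φ ψ : PowerSeries A}
    (h : ∀ M, (X : PowerSeries A) ^ M ∣ φ - ψ) : φ = ψ := by
  ext N
  have := X_pow_dvd_iff.mp (h (N + 1)) N N.lt_succ_self
  rwa [map_sub, sub_eq_zero] at this

lemma coeff_X_pow_mul_of_X_pow_dvd_sub_one {f : PowerSeries A} {e m n : ℕ}
    (hf : X ^ m ∣ f - 1) (hn : n < e + m) :
    coeff n (X ^ e * f) = if n = e then 1 else 0 := by
  have htail : coeff n (X ^ e * (f - 1)) = 0 :=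
    X_pow_dvd_iff.mp (pow_add (X : PowerSeries A) e m ▸ mul_dvd_mul_left _ hf) n hn
  rw [show X ^ e * f = X ^ e + X ^ e * (f - 1) by ring, map_add, htail, add_zero, coeff_X_pow]

end CommRing

/-- The condition under which the partial products of `seriesProd f` stabilise
coefficientwise. -/
def OneModXPowSucc (f : ℕ → PowerSeries ℤ) : Prop :=
  ∀ n, (X : PowerSeries ℤ) ^ (n + 1) ∣ f n - 1

section OneModXPowSucc

variable {f g : ℕ → PowerSeries ℤ}

lemma OneModXPowSucc.X_pow_dvd_prod_range_sub (hf : OneModXPowSucc f) {M M' : ℕ}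
    (h : M ≤ M') : X ^ M ∣ ∏ n ∈ range M', f n - ∏ n ∈ range M, f n := by
  rw [← prod_range_mul_prod_Ico f h, ← mul_sub_one]
  refine dvd_mul_of_dvd_right (dvd_prod_sub_one fun n hn => ?_) _
  exact (pow_dvd_pow X (by grind)).trans (hf n)

lemma OneModXPowSucc.X_pow_dvd_seriesProd_sub (hf : OneModXPowSucc f) (M : ℕ) :
    X ^ M ∣ seriesProd f - ∏ n ∈ range M, f n := by
  refine X_pow_dvd_iff.mpr fun d hd => ?_
  rw [map_sub, seriesProd, coeff_mk, ← map_sub]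
  exact X_pow_dvd_iff.mp (dvd_sub_comm.mp (hf.X_pow_dvd_prod_range_sub hd)) d d.lt_succ_self

lemma OneModXPowSucc.coeff_seriesProd (hf : OneModXPowSucc f) {N M : ℕ} (h : N < M) :
    coeff N (seriesProd f) = coeff N (∏ n ∈ range M, f n) := by
  rw [← sub_eq_zero, ← map_sub]
  exact X_pow_dvd_iff.mp (hf.X_pow_dvd_seriesProd_sub M) N h

lemma OneModXPowSucc.mul (hf : OneModXPowSucc f) (hg : OneModXPowSucc g) :
    OneModXPowSucc fun n => f n * g n :=
  fun n => dvd_mul_sub_one (hf n) (hg n)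

lemma seriesProd_mul (hf : OneModXPowSucc f) (hg : OneModXPowSucc g) :
    seriesProd f * seriesProd g = seriesProd fun n => f n * g n := by
  refine eq_of_forall_X_pow_dvd_sub fun M => ?_
  have e : seriesProd f * seriesProd g - seriesProd (fun n => f n * g n) =
      (seriesProd f - ∏ n ∈ range M, f n) * seriesProd g +
        (∏ n ∈ range M, f n) * (seriesProd g - ∏ n ∈ range M, g n) -
        (seriesProd (fun n => f n * g n) - ∏ n ∈ range M, (f n * g n)) := by
    rw [prod_mul_distrib]; ring
  rw [e]
  exact dvd_sub (dvd_add (dvd_mul_of_dvd_left (hf.X_pow_dvd_seriesProd_sub M) _)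
    (dvd_mul_of_dvd_right (hg.X_pow_dvd_seriesProd_sub M) _))
    ((hf.mul hg).X_pow_dvd_seriesProd_sub M)

lemma seriesProd_eq_of_prod_range_mul (hf : OneModXPowSucc f) (hg : OneModXPowSucc g) {b : ℕ}
    (hb : 0 < b) (h : ∀ M, ∏ n ∈ range (b * M), f n = ∏ k ∈ range M, g k) :
    seriesProd f = seriesProd g := by
  refine eq_of_forall_X_pow_dvd_sub fun M => ?_
  rw [show seriesProd f - seriesProd g = (seriesProd f - ∏ n ∈ range (b * M), f n) -
      (seriesProd g - ∏ k ∈ range M, g k) by rw [h]; ring]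
  exact dvd_sub ((pow_dvd_pow X (Nat.le_mul_of_pos_left M hb)).trans
    (hf.X_pow_dvd_seriesProd_sub _)) (hg.X_pow_dvd_seriesProd_sub M)

end OneModXPowSucc

lemma seriesProd_one_sub_X_pow_mul (P : ℕ → Prop) [DecidablePred P] :
    seriesProd (fun n => 1 - X ^ (n + 1)) *
        seriesProd (fun n => if P n then 1 else invOfUnit (1 - X ^ (n + 1)) 1) =
      seriesProd fun n => if P n then 1 - X ^ (n + 1) else 1 := by
  have hinv (n : ℕ) : (1 - X ^ (n + 1) : PowerSeries ℤ) * invOfUnit (1 - X ^ (n + 1)) 1 = 1 :=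
    mul_invOfUnit _ _ (by simp)
  rw [seriesProd_mul (fun n => pow_dvd_one_sub_pow_sub_one X le_rfl) fun n => ?_]
  · congr 1
    funext n
    split_ifs
    · exact mul_one _
    · exact hinv n
  · split_ifs
    · simp
    · exact ⟨invOfUnit (1 - X ^ (n + 1)) 1, by linear_combination hinv n⟩

noncomputable def jacobiFactor (a c b k : ℕ) : PowerSeries ℤ :=
  (1 - X ^ (b * k + a)) * (1 - X ^ (b * k + c)) * (1 - X ^ (b * k + b))

lemma oneModXPowSucc_jacobiFactor {a c b : ℕ} (ha : 0 < a) (hc : 0 < c) (hab : a + c = b) :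
    OneModXPowSucc (jacobiFactor a c b) := fun k => by
  have hk : k ≤ b * k := Nat.le_mul_of_pos_left k (by omega)
  exact dvd_mul_sub_one (dvd_mul_sub_one (pow_dvd_one_sub_pow_sub_one X (by omega))
    (pow_dvd_one_sub_pow_sub_one X (by omega))) (pow_dvd_one_sub_pow_sub_one X (by omega))

lemma add_one_mod_conditions_iff {a c b M i : ℕ} (ha : 0 < a) (hc : 0 < c) (hab : a + c = b)
    (hi : i < b) :
    ((b * M + i + 1) % b = 0 ∨ (b * M + i + 1) % b = a % b ∨ (b * M + i + 1 + a) % b = 0) ↔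
      (i + 1 = a ∨ i + 1 = c ∨ i + 1 = b) := by
  rw [show b * M + i + 1 = i + 1 + b * M by ring,
    show i + 1 + b * M + a = i + 1 + a + b * M by ring, Nat.add_mul_mod_self_left,
    Nat.add_mul_mod_self_left, Nat.mod_eq_of_lt (by omega : a < b)]
  rcases (show i + 1 = b ∨ i + 1 + a < b ∨ (i + 1 < b ∧ b ≤ i + 1 + a) by omega)
    with h | h | h
  · rw [h, Nat.mod_self, Nat.add_mod_left, Nat.mod_eq_of_lt (by omega : a < b)]
    omega
  · rw [Nat.mod_eq_of_lt (by omega : i + 1 < b), Nat.mod_eq_of_lt h]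
    omega
  · rw [Nat.mod_eq_of_lt h.1, Nat.mod_eq_sub_mod h.2, Nat.mod_eq_of_lt (by omega)]
    omega

lemma prod_range_ite_mod_eq_jacobiFactor {a c b : ℕ} (ha : 0 < a) (hc : 0 < c) (hab : a + c = b)
    (hac : a ≠ c) (M : ℕ) :
    ∏ i ∈ range b, (if (b * M + i + 1) % b = 0 ∨ (b * M + i + 1) % b = a % b ∨
        (b * M + i + 1 + a) % b = 0 then 1 - X ^ (b * M + i + 1) else 1 : PowerSeries ℤ) =
      jacobiFactor a c b M := by
  have hfilter : (range b).filter (fun i => i + 1 = a ∨ i + 1 = c ∨ i + 1 = b) =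
      {a - 1, c - 1, b - 1} := by
    ext i
    simp only [mem_filter, mem_range, mem_insert, mem_singleton]
    omega
  rw [prod_congr rfl fun i hi =>
      if_congr (add_one_mod_conditions_iff ha hc hab (mem_range.mp hi)) rfl rfl,
    ← prod_filter, hfilter, prod_insert (by simp; omega), prod_insert (by simp; omega),
    prod_singleton, show b * M + (a - 1) + 1 = b * M + a by omega,
    show b * M + (c - 1) + 1 = b * M + c by omega, show b * M + (b - 1) + 1 = b * M + b by omega,
    jacobiFactor, mul_assoc]

lemma seriesProd_ite_mod_eq_jacobiFactor {a c b : ℕ} (ha : 0 < a) (hc : 0 < c) (hab : a + c = b)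
    (hac : a ≠ c) :
    seriesProd (fun n => if (n + 1) % b = 0 ∨ (n + 1) % b = a % b ∨ (n + 1 + a) % b = 0 then
        1 - X ^ (n + 1) else 1) = seriesProd (jacobiFactor a c b) := by
  refine seriesProd_eq_of_prod_range_mul (fun n => ?_) (oneModXPowSucc_jacobiFactor ha hc hab)
    (by omega : 0 < b) fun M => ?_
  · split_ifs
    · exact pow_dvd_one_sub_pow_sub_one X le_rfl
    · simp
  · induction M with
    | zero => simp
    | succ M ih =>
      rw [mul_add_one, prod_range_add, ih, prod_range_succ,
        prod_range_ite_mod_eq_jacobiFactor ha hc hab hac M]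

lemma X_pow_mul_prod_range_jacobiFactor (a c b M : ℕ) (hab : a + c = b) :
    X ^ (a * M) * ∏ k ∈ range M, jacobiFactor a c b k =
      ∑ k ∈ range (2 * M + 1), (-1) ^ (k + M) * (X ^ (a * k + b * triangular (k - M)) *
        (qPochhammer (X ^ b) M * gaussBinom (X ^ b) (2 * M) k)) := by
  have hx : ∏ k ∈ range M, (1 - X ^ (b * k + a) : PowerSeries ℤ) =
      ∏ k ∈ range M, (1 - X ^ a * (X ^ b) ^ k) :=
    prod_congr rfl fun k _ => by rw [← pow_mul, ← pow_add, add_comm]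
  have hsub : X ^ (a * M) * ∏ k ∈ range M, (1 - X ^ (b * k + c) : PowerSeries ℤ) =
      ∏ k ∈ range M, (X ^ a - (X ^ b) ^ (k + 1)) := by
    rw [pow_mul, ← card_range M, ← prod_const, card_range, ← prod_mul_distrib]
    refine prod_congr rfl fun k _ => ?_
    rw [← pow_mul, mul_sub, mul_one, ← pow_add, show a + (b * k + c) = b * (k + 1) by grind]
  have hpoch : ∏ k ∈ range M, (1 - X ^ (b * k + b) : PowerSeries ℤ) = qPochhammer (X ^ b) M :=
    prod_congr rfl fun k _ => by rw [← pow_mul, mul_add_one]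
  have hjtp := prod_one_sub_mul_prod_sub_eq_sum (X ^ a : PowerSeries ℤ) (X ^ b)
    (pow_ne_zero b X_ne_zero) M
  rw [← hx, ← hsub] at hjtp
  simp only [jacobiFactor]
  rw [prod_mul_distrib, prod_mul_distrib, hpoch]
  calc _ = (∏ k ∈ range M, (1 - X ^ (b * k + a) : PowerSeries ℤ)) *
        (X ^ (a * M) * ∏ k ∈ range M, (1 - X ^ (b * k + c))) * qPochhammer (X ^ b) M := by ring
    _ = _ := by
      rw [hjtp, sum_mul]
      exact sum_congr rfl fun k _ => by rw [pow_add X, pow_mul, pow_mul]; ring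

lemma abs_le_mul_add_mul_triangular {a c b : ℕ} (ha : 0 < a) (hc : 0 < c) (hab : a + c = b)
    (j : ℤ) : |j| ≤ a * j + b * triangular j := by
  have hsplit : 2 * ((a : ℤ) * j + b * triangular j) = a * (j * (j + 1)) + c * (j * (j - 1)) := by
    rw [show (b : ℤ) = a + c by exact_mod_cast hab.symm]
    linear_combination ((a : ℤ) + c) * two_mul_natCast_triangular j
  have ha' : (1 : ℤ) ≤ a := by exact_mod_cast ha
  have hc' : (1 : ℤ) ≤ c := by exact_mod_cast hc
  have h1 : 0 ≤ j * (j + 1) := by rcases le_or_gt 0 j with h | h <;> nlinarith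
  have h2 : 0 ≤ j * (j - 1) := by rcases le_or_gt 1 j with h | h <;> nlinarith
  rcases le_or_gt 0 j with h | h
  · rw [abs_of_nonneg h]
    nlinarith [mul_le_mul_of_nonneg_right ha' h1, mul_nonneg (by omega : (0 : ℤ) ≤ c) h2]
  · rw [abs_of_neg h]
    nlinarith [mul_le_mul_of_nonneg_right hc' h2, mul_nonneg (by omega : (0 : ℤ) ≤ a) h1]

lemma coeff_jacobi_summand {a c b M N k : ℕ} (ha : 0 < a) (hc : 0 < c) (hab : a + c = b)
    (hNM : N < M) (hk : k ≤ 2 * M) :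
    coeff (N + a * M) ((-1) ^ (k + M) * (X ^ (a * k + b * triangular (k - M)) *
        (qPochhammer (X ^ b) M * gaussBinom (X ^ b) (2 * M) k))) =
      if ((a : ℤ) * (k - M) + b * triangular (k - M)).toNat = N then
        ((k - M : ℤ).negOnePow : ℤ) else 0 := by
  have htail := pow_dvd_qPochhammer_mul_gaussBinom_sub_one (X ^ b : PowerSeries ℤ)
    (show min k (2 * M - k) ≤ M by omega)
  rw [Nat.add_sub_cancel' hk, ← pow_mul] at htail
  have hsign : ((k - M : ℤ).negOnePow : ℤ) = (-1) ^ (k + M) := by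
    rw [Int.negOnePow_sub, ← Int.negOnePow_add, ← Nat.cast_add, Int.coe_negOnePow_natCast]
  have hb : min k (2 * M - k) + 1 ≤ b * (min k (2 * M - k) + 1) :=
    Nat.le_mul_of_pos_left _ (by omega)
  have hj := abs_le_mul_add_mul_triangular ha hc hab (k - M)
  have hz : (a : ℤ) * (k - M) + b * triangular (k - M) =
      ((a * k + b * triangular (k - M) : ℕ) : ℤ) - ((a * M : ℕ) : ℤ) := by push_cast; ring
  rw [hz] at hj ⊢
  have hj1 := (le_abs_self _).trans hj
  have hj2 := (neg_le_abs _).trans hj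
  generalize a * k + b * triangular (k - M) = e at *
  generalize a * M = m at *
  rw [show (-1 : PowerSeries ℤ) ^ (k + M) = C ((-1 : ℤ) ^ (k + M)) by simp, coeff_C_mul,
    coeff_X_pow_mul_of_X_pow_dvd_sub_one htail (by omega), hsign]
  split_ifs <;> omega

lemma coeff_seriesSum_eq_sum {c : ℤ → ℤ} {e : ℤ → ℕ} {N : ℕ} (s : Finset ℤ)
    (hs : ∀ n ∉ s, e n ≠ N) :
    coeff N (seriesSum c e) = ∑ n ∈ s, if e n = N then c n else 0 := by
  rw [seriesSum, coeff_mk]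
  exact tsum_eq_sum fun n hn => if_neg (hs n hn)

lemma seriesSum_comp_equiv (c : ℤ → ℤ) (e : ℤ → ℕ) (σ : ℤ ≃ ℤ) :
    seriesSum (c ∘ σ) (e ∘ σ) = seriesSum c e := by
  ext N
  simp only [seriesSum, coeff_mk, Function.comp_apply]
  exact σ.tsum_eq fun n => if e n = N then c n else 0

/-- The Jacobi triple product identity at `x = X ^ a`, `q = X ^ b`. -/
theorem seriesProd_jacobiFactor {a c b : ℕ} (ha : 0 < a) (hc : 0 < c) (hab : a + c = b) :
    seriesProd (jacobiFactor a c b) =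
      seriesSum (fun j => (j.negOnePow : ℤ))
        (fun j => ((a : ℤ) * j + b * triangular j).toNat) := by
  ext N
  set M := N + 1
  rw [(oneModXPowSucc_jacobiFactor ha hc hab).coeff_seriesProd (show N < M by omega),
    ← coeff_X_pow_mul _ (a * M) N, X_pow_mul_prod_range_jacobiFactor a c b M hab, map_sum,
    coeff_seriesSum_eq_sum ((range (2 * M + 1)).image fun k : ℕ => (k : ℤ) - M), sum_image]
  · exact sum_congr rfl fun k hk =>
      coeff_jacobi_summand ha hc hab (by omega) (Nat.lt_succ_iff.mp (mem_range.mp hk))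
  · intro k _ l _ h
    simpa using h
  · intro j hj heq
    have hj1 := (le_abs_self j).trans (abs_le_mul_add_mul_triangular ha hc hab j)
    have hj2 := (neg_le_abs j).trans (abs_le_mul_add_mul_triangular ha hc hab j)
    generalize (a : ℤ) * j + b * triangular j = S at *
    exact hj (mem_image.mpr ⟨(j + M).toNat, mem_range.mpr (by omega), by omega⟩)

/-- For every integer `t ≥ 2`,
`Σ_{n∈ℤ} (-1)^n q^{(2t-1)n/2 + 3(2t-1)²n²/2}
  = ∏_{n ≥ 1} (1-q^n) · ∏_{n ≥ 1, n ≢ 0, ±(2t-1)(3t-2) (mod 3(2t-1)²)} 1/(1-q^n)`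
as formal power series. -/
theorem theta_eq_euler_product_mul_character (t : ℕ) (ht : 2 ≤ t) :
    seriesSum (fun n => (n.negOnePow : ℤ))
        (fun n => (((2 * (t : ℤ) - 1) * n + 3 * (2 * (t : ℤ) - 1) ^ 2 * n ^ 2) / 2).toNat)
      = seriesProd (fun n => 1 - X ^ (n + 1)) *
          AG (3 * (2 * t - 1) ^ 2) ((2 * t - 1) * (3 * t - 2)) := by
  obtain ⟨s, rfl⟩ : ∃ s, t = s + 1 := ⟨t - 1, by omega⟩
  have hb : 3 * (2 * (s + 1) - 1) ^ 2 = (2 * s + 1) * (3 * s + 1) + (2 * s + 1) * (3 * s + 2) := by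
    rw [show 2 * (s + 1) - 1 = 2 * s + 1 by omega]; ring
  have ha : (2 * (s + 1) - 1) * (3 * (s + 1) - 2) = (2 * s + 1) * (3 * s + 1) := by
    rw [show 2 * (s + 1) - 1 = 2 * s + 1 by omega, show 3 * (s + 1) - 2 = 3 * s + 1 by omega]
  rw [hb, ha, AG, seriesProd_one_sub_X_pow_mul, seriesProd_ite_mod_eq_jacobiFactor (by positivity)
    (by positivity) rfl (by nlinarith), seriesProd_jacobiFactor (by positivity) (by positivity) rfl,
    ← seriesSum_comp_equiv _ _ (Equiv.neg ℤ)]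
  congr 1 <;> funext j
  · simp [Int.negOnePow_neg]
  · simp only [Function.comp_apply, Equiv.neg_apply]
    congr 1
    refine Int.ediv_eq_of_eq_mul_right two_ne_zero ?_
    push_cast
    linear_combination (-3 * (2 * (s : ℤ) + 1) ^ 2) * two_mul_natCast_triangular j
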